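/- Let E' ≤ E be wald topologies with induced leaf partitions L_1,...,L_K and L'_1,...,L'_{K'}. If two distinct blocks L'_{α'}, L'_{α''} of E' are contained in a common block L_α of E, then there exists a split A|B ∈ E with L'_{α'} ⊆ A and L'_{α''} ⊆ B which admits no valid restriction to any block of E' (i.e., the split lies in R_{cut}). -/

import Mathlib

attribute [local instance] Classical.propDecidable

/-- A split: an unordered pair of finite sets of labels. -/
abbrev Split (N : ℕ) := Sym2 (Finset (Fin N))

namespace Wald

variable {N : ℕ}

/-- `e` is a split of the block `M`: `e = {A, B}` with `A, B` a partition of `M`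
into two nonempty parts. -/
def IsSplitOf (e : Split N) (M : Finset (Fin N)) : Prop :=
  ∃ A B : Finset (Fin N), e = s(A, B) ∧ A ∪ B = M ∧ Disjoint A B ∧
    A.Nonempty ∧ B.Nonempty

/-- Two splits `A|B` and `C|D` are compatible if one of the four intersections
`A∩C, A∩D, B∩C, B∩D` is empty. -/
def Compatible (e f : Split N) : Prop :=
  ∃ A B C D : Finset (Fin N), e = s(A, B) ∧ f = s(C, D) ∧
    (A ∩ C = ∅ ∨ A ∩ D = ∅ ∨ B ∩ C = ∅ ∨ B ∩ D = ∅)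

/-- The split `e = A|B` separates `u` and `v` if `u ∈ A` and `v ∈ B` (or vice versa). -/
def Separates (e : Split N) (u v : Fin N) : Prop :=
  ∃ A B : Finset (Fin N), e = s(A, B) ∧ u ∈ A ∧ v ∈ B

/-- The restriction `e|_{L'}` of a split `e = A|B`: `(A ∩ L')|(B ∩ L')`. -/
def restrict (e : Split N) (L' : Finset (Fin N)) : Split N :=
  Sym2.map (· ∩ L') e

/-- The underlying block `A ∪ B` of a split `e = A|B`. -/
def blockOf (e : Split N) : Finset (Fin N) :=
  Sym2.lift ⟨fun A B => A ∪ B, fun _ _ => Finset.union_comm _ _⟩ e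

/-- The restriction of `e = A|B` to `L'` is a valid split iff both
`A ∩ L'` and `B ∩ L'` are nonempty. -/
def ValidRestrict (e : Split N) (L' : Finset (Fin N)) : Prop :=
  ∃ A B : Finset (Fin N), e = s(A, B) ∧ (A ∩ L').Nonempty ∧ (B ∩ L').Nonempty

/-- A wald topology on the label set `{1,…,N}`: a partition of the labels into
blocks, together with a set of splits of the blocks, such that splits of a common
block are pairwise compatible and any two distinct labels of a common block are
separated by some split. -/
structure WaldTop (N : ℕ) where
  blocks : Finset (Finset (Fin N))
  splits : Finset (Split N)
  nonempty_blocks : ∀ B ∈ blocks, B.Nonempty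
  cover : ∀ u : Fin N, ∃! B, B ∈ blocks ∧ u ∈ B
  split_mem : ∀ e ∈ splits, ∃ B ∈ blocks, IsSplitOf e B
  compat : ∀ e ∈ splits, ∀ f ∈ splits, blockOf e = blockOf f → Compatible e f
  separating : ∀ B ∈ blocks, ∀ u ∈ B, ∀ v ∈ B, u ≠ v →
    ∃ e ∈ splits, Separates e u v

/-- The partial order `E' ≤ E` on wald topologies: refinement of the leaf
partitions, restriction of splits, and the cut property. -/
def LE' (E' E : WaldTop N) : Prop :=
  (∀ B' ∈ E'.blocks, ∃ B ∈ E.blocks, B' ⊆ B) ∧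
  (∀ e' ∈ E'.splits, ∃ e ∈ E.splits, restrict e (blockOf e') = e') ∧
  (∀ B₁ ∈ E'.blocks, ∀ B₂ ∈ E'.blocks, B₁ ≠ B₂ →
    ∀ B ∈ E.blocks, B₁ ⊆ B → B₂ ⊆ B →
      ∃ A C : Finset (Fin N), s(A, C) ∈ E.splits ∧ B₁ ⊆ A ∧ B₂ ⊆ C)

/-- `R_{e'}`: the splits of `E` whose restriction to the block of `e'` equals `e'`. -/
def Rset (E : WaldTop N) (e' : Split N) : Set (Split N) :=
  {e | e ∈ E.splits ∧ restrict e (blockOf e') = e'}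

/-- `R_dis`: the splits of `E` admitting a valid restriction to some block of `E'`
which does not belong to `E'`. -/
def Rdis (E' E : WaldTop N) : Set (Split N) :=
  {e | e ∈ E.splits ∧ ∃ B' ∈ E'.blocks, ValidRestrict e B' ∧ restrict e B' ∉ E'.splits}

/-- `R_cut`: the splits of `E` admitting no valid restriction to any block of `E'`. -/
def Rcut (E' E : WaldTop N) : Set (Split N) :=
  {e | e ∈ E.splits ∧ ∀ B' ∈ E'.blocks, ¬ ValidRestrict e B'}

/-- `E(u,v)`: the set of splits of `E` separating `u` and `v`. -/
def sepSet (E : WaldTop N) (u v : Fin N) : Set (Split N) :=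
  {e | e ∈ E.splits ∧ Separates e u v}

end Wald

/-
A split `A|C` with `B₁ ⊆ A` and `B₂ ⊆ C` exists by the cut property; take one with `A` minimal.
If it cut some block `B₃` of `E'`, the cut property applied to `B₁` and `B₃` gives a split `A'|C'`
of the same block with `B₁ ⊆ A'`, `B₃ ⊆ C'`. It meets `A|C` in `A ∩ A' ⊇ B₁` and, on both sides
of `B₃`, in `A ∩ C'` and `C ∩ C'`; so compatibility forces `C ∩ A' = ∅`, i.e. `A' ⊂ A` and
`C ⊆ C'`, contradicting minimality.
-/

namespace Wald

variable {N : ℕ}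

@[simp]
lemma blockOf_mk (A C : Finset (Fin N)) : blockOf s(A, C) = A ∪ C := rfl

lemma validRestrict_mk_iff {A C L : Finset (Fin N)} :
    ValidRestrict s(A, C) L ↔ (A ∩ L).Nonempty ∧ (C ∩ L).Nonempty := by
  constructor
  · rintro ⟨X, Y, heq, hX, hY⟩
    rcases Sym2.eq_iff.mp heq with ⟨rfl, rfl⟩ | ⟨rfl, rfl⟩
    exacts [⟨hX, hY⟩, ⟨hY, hX⟩]
  · exact fun ⟨hA, hC⟩ => ⟨A, C, rfl, hA, hC⟩

lemma Compatible.inter_eq_empty {A C A' C' : Finset (Fin N)}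
    (h : Compatible s(A, C) s(A', C')) :
    A ∩ A' = ∅ ∨ A ∩ C' = ∅ ∨ C ∩ A' = ∅ ∨ C ∩ C' = ∅ := by
  obtain ⟨X, Y, Z, W, h₁, h₂, h⟩ := h
  rcases Sym2.eq_iff.mp h₁ with ⟨rfl, rfl⟩ | ⟨rfl, rfl⟩ <;>
    rcases Sym2.eq_iff.mp h₂ with ⟨rfl, rfl⟩ | ⟨rfl, rfl⟩ <;> tauto

lemma Compatible.subset_of_nonempty {A C A' C' : Finset (Fin N)}
    (h : Compatible s(A, C) s(A', C')) (hU : A ∪ C = A' ∪ C')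
    (hAA' : (A ∩ A').Nonempty) (hAC' : (A ∩ C').Nonempty) (hCC' : (C ∩ C').Nonempty) :
    A' ⊆ A ∧ C ⊆ C' := by
  have hCA' : Disjoint C A' := by
    rw [Finset.disjoint_iff_inter_eq_empty]
    rcases h.inter_eq_empty with h | h | h | h
    exacts [absurd h hAA'.ne_empty, absurd h hAC'.ne_empty, h, absurd h hCC'.ne_empty]
  constructor
  · intro x hx
    have : x ∈ A ∪ C := hU ▸ Finset.mem_union_left _ hx
    exact (Finset.mem_union.mp this).resolve_right fun hxC =>
      Finset.disjoint_left.mp hCA' hxC hx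
  · intro x hx
    have : x ∈ A' ∪ C' := hU ▸ Finset.mem_union_right _ hx
    exact (Finset.mem_union.mp this).resolve_left (Finset.disjoint_left.mp hCA' hx)

namespace WaldTop

variable {E : WaldTop N}

lemma block_eq_of_mem {D₁ D₂ : Finset (Fin N)} (h₁ : D₁ ∈ E.blocks) (h₂ : D₂ ∈ E.blocks)
    {u : Fin N} (hu₁ : u ∈ D₁) (hu₂ : u ∈ D₂) : D₁ = D₂ :=
  (E.cover u).unique ⟨h₁, hu₁⟩ ⟨h₂, hu₂⟩

lemma union_mem_blocks_and_disjoint {A C : Finset (Fin N)} (hs : s(A, C) ∈ E.splits) :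
    A ∪ C ∈ E.blocks ∧ Disjoint A C := by
  obtain ⟨M, hM, A₀, C₀, heq, hun, hdisj, -, -⟩ := E.split_mem _ hs
  rcases Sym2.eq_iff.mp heq with ⟨rfl, rfl⟩ | ⟨rfl, rfl⟩
  · exact ⟨hun ▸ hM, hdisj⟩
  · exact ⟨Finset.union_comm C A ▸ hun ▸ hM, hdisj.symm⟩

end WaldTop

variable {E' E : WaldTop N}

lemma LE'.exists_ssubset_of_validRestrict (h : LE' E' E) {A C B₁ B₃ : Finset (Fin N)}
    (hs : s(A, C) ∈ E.splits) (hB₁ : B₁ ∈ E'.blocks) (hB₁A : B₁ ⊆ A) (hB₃ : B₃ ∈ E'.blocks)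
    (hv : ValidRestrict s(A, C) B₃) :
    ∃ A' C', s(A', C') ∈ E.splits ∧ B₁ ⊆ A' ∧ A' ⊂ A ∧ C ⊆ C' := by
  obtain ⟨⟨x, hx⟩, ⟨y, hy⟩⟩ := validRestrict_mk_iff.mp hv
  rw [Finset.mem_inter] at hx hy
  obtain ⟨u, hu⟩ := E'.nonempty_blocks B₁ hB₁
  obtain ⟨hAC, hdisj⟩ := WaldTop.union_mem_blocks_and_disjoint hs
  have hne : B₁ ≠ B₃ := by
    rintro rfl
    exact Finset.disjoint_left.mp hdisj (hB₁A hy.2) hy.1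
  have hB₃AC : B₃ ⊆ A ∪ C := by
    obtain ⟨D, hD, hB₃D⟩ := h.1 B₃ hB₃
    rwa [← WaldTop.block_eq_of_mem hD hAC (hB₃D hx.2) (Finset.mem_union_left _ hx.1)]
  obtain ⟨A', C', hs', hB₁A', hB₃C'⟩ :=
    h.2.2 B₁ hB₁ B₃ hB₃ hne _ hAC (hB₁A.trans Finset.subset_union_left) hB₃AC
  obtain ⟨hAC', hdisj'⟩ := WaldTop.union_mem_blocks_and_disjoint hs'
  have hU : A ∪ C = A' ∪ C' := WaldTop.block_eq_of_mem hAC hAC'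
    (Finset.mem_union_left _ (hB₁A hu)) (Finset.mem_union_left _ (hB₁A' hu))
  obtain ⟨hA'A, hCC'⟩ := (E.compat _ hs _ hs' (by simpa using hU)).subset_of_nonempty hU
    ⟨u, Finset.mem_inter.mpr ⟨hB₁A hu, hB₁A' hu⟩⟩ ⟨x, Finset.mem_inter.mpr ⟨hx.1, hB₃C' hx.2⟩⟩
    ⟨y, Finset.mem_inter.mpr ⟨hy.1, hB₃C' hy.2⟩⟩
  have hxA' : x ∉ A' := fun hxA' => Finset.disjoint_left.mp hdisj' hxA' (hB₃C' hx.2)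
  exact ⟨A', C', hs', hB₁A', (Finset.ssubset_iff_of_subset hA'A).mpr ⟨x, hx.1, hxA'⟩, hCC'⟩

lemma LE'.exists_mem_Rcut_of_mem_splits (h : LE' E' E) {B₁ : Finset (Fin N)}
    (hB₁ : B₁ ∈ E'.blocks) (A C : Finset (Fin N)) (hs : s(A, C) ∈ E.splits) (hB₁A : B₁ ⊆ A) :
    ∃ A' C', s(A', C') ∈ E.splits ∧ B₁ ⊆ A' ∧ C ⊆ C' ∧ s(A', C') ∈ Rcut E' E := by
  induction A using Finset.strongInduction generalizing C with
  | H A ih =>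
    by_cases hcut : ∀ B₃ ∈ E'.blocks, ¬ ValidRestrict s(A, C) B₃
    · exact ⟨A, C, hs, hB₁A, subset_rfl, hs, hcut⟩
    push Not at hcut
    obtain ⟨B₃, hB₃, hv⟩ := hcut
    obtain ⟨A', C', hs', hB₁A', hA'A, hCC'⟩ := h.exists_ssubset_of_validRestrict hs hB₁ hB₁A hB₃ hv
    obtain ⟨A'', C'', hs'', hB₁A'', hC'C'', hcut''⟩ := ih A' hA'A C' hs' hB₁A'
    exact ⟨A'', C'', hs'', hB₁A'', hCC'.trans hC'C'', hcut''⟩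

end Wald

open Wald in
/-- For `E' ≤ E`, if two distinct blocks `B₁, B₂` of `E'` are
contained in a common block `B` of `E`, then there is a split `A|C ∈ E` with
`B₁ ⊆ A`, `B₂ ⊆ C` lying in `R_cut`, i.e. admitting no valid restriction to any
block of `E'`. -/
theorem stmt_12 {N : ℕ} (E' E : WaldTop N) (h : LE' E' E)
    (B₁ B₂ : Finset (Fin N)) (hB₁ : B₁ ∈ E'.blocks) (hB₂ : B₂ ∈ E'.blocks)
    (hne : B₁ ≠ B₂) (B : Finset (Fin N)) (hB : B ∈ E.blocks)
    (h₁ : B₁ ⊆ B) (h₂ : B₂ ⊆ B) :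
    ∃ A C : Finset (Fin N), s(A, C) ∈ E.splits ∧ B₁ ⊆ A ∧ B₂ ⊆ C ∧
      s(A, C) ∈ Rcut E' E := by
  obtain ⟨A, C, hs, hB₁A, hB₂C⟩ := h.2.2 B₁ hB₁ B₂ hB₂ hne B hB h₁ h₂
  obtain ⟨A', C', hs', hB₁A', hCC', hcut⟩ := h.exists_mem_Rcut_of_mem_splits hB₁ A C hs hB₁A
  exact ⟨A', C', hs', hB₁A', hB₂C.trans hCC', hcut⟩
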